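/- arXiv:1903.05735 — 3 statements merged into one kernel-verified Lean document; each statement's English description precedes it below -/
import Mathlib

section
/- For every odd integer s and every integer l ≥ 1, the 2-adic valuation of F_{3·2^l}(s) is exactly l + 2. -/
/-!
With the Lucas polynomials `L`, the doubling formulas `F₂ₙ = Fₙ Lₙ` and `L₂ₙ = Lₙ² - 2 (-1)ⁿ`
hold. For odd `s` we have `s² ≡ 1 (mod 8)`, so `F₃(s) = s² + 1` is twice an odd number and
`L₃(s) = s (s² + 3)` is four times an odd number; hence `ν₂ F₆(s) = 3` and `L₆(s) = L₃(s)² + 2`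
is twice an odd number. Along `L₂ₙ = Lₙ² - 2` (`n` even) this property of `L_{3·2ᵏ}(s)` persists,
so every further doubling of the index adds exactly one factor `2` to `F`.
-/

open Polynomial

noncomputable def fibPoly : ℕ → Polynomial ℤ
  | 0 => 0
  | 1 => 1
  | n + 2 => X * fibPoly (n + 1) + fibPoly n

noncomputable def lucasPoly : ℕ → ℤ[X]
  | 0 => 2
  | 1 => X
  | n + 2 => X * lucasPoly (n + 1) + lucasPoly n

@[simp] lemma fibPoly_zero : fibPoly 0 = 0 := by simp [fibPoly]

@[simp] lemma fibPoly_one : fibPoly 1 = 1 := by simp [fibPoly]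

lemma fibPoly_add_two (n : ℕ) : fibPoly (n + 2) = X * fibPoly (n + 1) + fibPoly n := by
  simp [fibPoly]

lemma fibPoly_add (m n : ℕ) :
    fibPoly (m + n + 1) = fibPoly m * fibPoly n + fibPoly (m + 1) * fibPoly (n + 1) := by
  induction n using Nat.twoStepInduction generalizing m with
  | zero => simp
  | one => simp only [fibPoly_add_two, Nat.reduceAdd, zero_add, fibPoly_one, fibPoly_zero]; ring
  | more n ih₁ ih₂ =>
    rw [show m + (n + 2) + 1 = m + n + 1 + 2 by omega, fibPoly_add_two,
      show m + n + 1 + 1 = m + (n + 1) + 1 by omega, ih₁, ih₂,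
      fibPoly_add_two (n + 1), fibPoly_add_two n]
    ring

lemma fibPoly_cassini (n : ℕ) :
    fibPoly (n + 2) * fibPoly n - fibPoly (n + 1) ^ 2 = (-1) ^ (n + 1) := by
  induction n with
  | zero => simp [fibPoly_add_two]
  | succ n ih =>
    rw [fibPoly_add_two (n + 1), pow_succ (-1 : ℤ[X]) (n + 1)]
    linear_combination (-fibPoly (n + 2)) * fibPoly_add_two n - ih

lemma lucasPoly_succ (n : ℕ) : lucasPoly (n + 1) = fibPoly (n + 2) + fibPoly n := by
  induction n using Nat.twoStepInduction with
  | zero => simp [lucasPoly, fibPoly_add_two]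
  | one =>
    simp only [lucasPoly, fibPoly_add_two, Nat.reduceAdd, zero_add, fibPoly_one, fibPoly_zero]
    ring
  | more n ih₁ ih₂ =>
    rw [show lucasPoly (n + 2 + 1) = X * lucasPoly (n + 2) + lucasPoly (n + 1) from rfl,
      ih₁, ih₂, fibPoly_add_two (n + 2), fibPoly_add_two n]
    ring

lemma fibPoly_two_mul (n : ℕ) : fibPoly (2 * n) = fibPoly n * lucasPoly n := by
  cases n with
  | zero => simp
  | succ n =>
    rw [show 2 * (n + 1) = (n + 1) + n + 1 by omega, fibPoly_add, lucasPoly_succ]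
    ring

lemma lucasPoly_two_mul (n : ℕ) : lucasPoly (2 * n) = lucasPoly n ^ 2 - 2 * (-1) ^ n := by
  cases n with
  | zero => norm_num [lucasPoly]
  | succ n =>
    rw [show 2 * (n + 1) = (n + 1) + n + 1 by omega, lucasPoly_succ, lucasPoly_succ,
      show n + 1 + n + 2 = (n + 1) + (n + 1) + 1 by omega, fibPoly_add (n + 1) (n + 1),
      show n + 1 + n = n + n + 1 by omega, fibPoly_add n n]
    linear_combination (-2) * fibPoly_cassini n

lemma fibPoly_three : fibPoly 3 = X ^ 2 + 1 := by
  simp only [fibPoly_add_two, Nat.reduceAdd, zero_add, fibPoly_one, fibPoly_zero]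
  ring

lemma lucasPoly_three : lucasPoly 3 = X ^ 3 + 3 * X := by
  simp only [lucasPoly]
  ring

lemma padicValInt_prime_pow_mul {p : ℕ} [Fact p.Prime] {u : ℤ} (hu : ¬(p : ℤ) ∣ u) (k : ℕ) :
    padicValInt p ((p : ℤ) ^ k * u) = k := by
  have hu₀ : u ≠ 0 := by rintro rfl; exact hu (dvd_zero _)
  rw [padicValInt.mul (pow_ne_zero _ (by exact_mod_cast (Fact.out : p.Prime).ne_zero)) hu₀,
    padicValInt.eq_zero_of_not_dvd hu, ← Nat.cast_pow, padicValInt.of_nat,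
    padicValNat.prime_pow, add_zero]

lemma Int.exists_sq_eq_eight_mul_add_one {s : ℤ} (hs : Odd s) : ∃ t, s ^ 2 = 8 * t + 1 := by
  obtain ⟨k, rfl⟩ := hs
  obtain ⟨m, hm⟩ := Int.even_mul_succ_self k
  exact ⟨m, by linear_combination 4 * hm⟩

section OddArgument

variable {s : ℤ}

lemma fibPoly_eval_three_of_odd (hs : Odd s) : ∃ w, Odd w ∧ (fibPoly 3).eval s = 2 * w := by
  obtain ⟨t, ht⟩ := Int.exists_sq_eq_eight_mul_add_one hs
  refine ⟨4 * t + 1, ⟨2 * t, by ring⟩, ?_⟩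
  rw [fibPoly_three, eval_add, eval_pow, eval_X, eval_one]
  linear_combination ht

lemma lucasPoly_eval_three_of_odd (hs : Odd s) : ∃ w, Odd w ∧ (lucasPoly 3).eval s = 4 * w := by
  obtain ⟨t, ht⟩ := Int.exists_sq_eq_eight_mul_add_one hs
  refine ⟨s * (2 * t + 1), hs.mul ⟨t, by ring⟩, ?_⟩
  rw [lucasPoly_three]
  simp only [eval_add, eval_mul, eval_pow, eval_X, eval_ofNat]
  linear_combination s * ht

lemma lucasPoly_eval_three_mul_two_pow_of_odd (hs : Odd s) {k : ℕ} (hk : 1 ≤ k) :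
    ∃ v, Odd v ∧ (lucasPoly (3 * 2 ^ k)).eval s = 2 * v := by
  induction k, hk using Nat.le_induction with
  | base =>
    obtain ⟨w, -, hw⟩ := lucasPoly_eval_three_of_odd hs
    refine ⟨8 * w ^ 2 + 1, ⟨4 * w ^ 2, by ring⟩, ?_⟩
    rw [show 3 * 2 ^ 1 = 2 * 3 by rfl, lucasPoly_two_mul]
    simp only [eval_sub, eval_mul, eval_pow, eval_neg, eval_ofNat, eval_one, hw]
    ring
  | succ k hk ih =>
    obtain ⟨v, -, hv⟩ := ih
    have heven : Even (3 * 2 ^ k) := (Nat.even_pow.mpr ⟨even_two, by omega⟩).mul_left 3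
    refine ⟨2 * v ^ 2 - 1, ⟨v ^ 2 - 1, by ring⟩, ?_⟩
    rw [pow_succ, ← mul_assoc, mul_comm _ 2, lucasPoly_two_mul, heven.neg_one_pow]
    simp only [eval_sub, eval_mul, eval_pow, eval_ofNat, eval_one, hv]
    ring

lemma fibPoly_eval_three_mul_two_pow_of_odd (hs : Odd s) {l : ℕ} (hl : 1 ≤ l) :
    ∃ u, Odd u ∧ (fibPoly (3 * 2 ^ l)).eval s = 2 ^ (l + 2) * u := by
  induction l, hl using Nat.le_induction with
  | base =>
    obtain ⟨w, hw, hFw⟩ := fibPoly_eval_three_of_odd hs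
    obtain ⟨w', hw', hLw'⟩ := lucasPoly_eval_three_of_odd hs
    refine ⟨w * w', hw.mul hw', ?_⟩
    rw [show 3 * 2 ^ 1 = 2 * 3 by rfl, fibPoly_two_mul, eval_mul, hFw, hLw']
    ring
  | succ l hl ih =>
    obtain ⟨u, hu, hFu⟩ := ih
    obtain ⟨v, hv, hLv⟩ := lucasPoly_eval_three_mul_two_pow_of_odd hs hl
    refine ⟨u * v, hu.mul hv, ?_⟩
    rw [pow_succ, ← mul_assoc, mul_comm _ 2, fibPoly_two_mul, eval_mul, hFu, hLv]
    ring

end OddArgument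

theorem fibPoly_eval_two_adic_valuation (s : ℤ) (hs : Odd s) (l : ℕ) (hl : 1 ≤ l) :
    padicValInt 2 ((fibPoly (3 * 2 ^ l)).eval s) = l + 2 := by
  obtain ⟨u, hu, hF⟩ := fibPoly_eval_three_mul_two_pow_of_odd hs hl
  rw [hF]
  exact padicValInt_prime_pow_mul (by simpa [← even_iff_two_dvd] using hu) (l + 2)
end

section
/- For every odd integer s and every positive integer l, the sequence m ↦ F'_m(s) (mod 2^l) is periodic of period 3·2^l, where F'_m denotes the derivative of the m-th Fibonacci polynomial. -/
open Polynomial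

/-!
Evaluating at the dual number `t = s + ε` packs value and derivative together:
`F_m(t) = F_m(s) + F'_m(s) ε`, and the `F_m(t)` are the entries of the powers of
`M = !![t, 1; 1, 0]`. The differentiated recurrence recovers `F_{m+1}(s)` from three consecutive
values of `F'`, so the periods of `F'_m(s) mod 2^l` are exactly the exponents `p` with `M ^ p = 1`
over `(ℤ/2^l)[ε]`. By Cayley–Hamilton `M^3 = t + (t^2 + 1) M` with `t^2 + 1` divisible by 2
(as `s` is odd), whence `M^(3·2^j) ≡ t^(2^j) ≡ (1 + ε)^(2^j) = 1 + 2^j ε` modulo `2^(j+1)`.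
Thus `M^3` has order exactly `2^l`, while modulo 2 the matrix `M` becomes `!![1, 1; 1, 0]`,
of order 3; so every period is a multiple of `3·2^l`.
-/

open TrivSqZeroExt DualNumber Function

lemma derivative_fibPoly_add_two (m : ℕ) :
    derivative (fibPoly (m + 2)) =
      fibPoly (m + 1) + X * derivative (fibPoly (m + 1)) + derivative (fibPoly m) := by
  rw [fibPoly, derivative_add, derivative_mul, derivative_X, one_mul]

lemma aeval_intCast {R : Type*} [Ring R] (s : ℤ) (q : ℤ[X]) :
    aeval (s : R) q = ((q.eval s : ℤ) : R) := by
  rw [← eq_intCast (algebraMap ℤ R), aeval_algebraMap_apply, coe_aeval_eq_eval, eq_intCast]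

lemma add_two_mul_pow_two_pow {S : Type*} [CommRing S] {j : ℕ} (h2 : (2 : S) ^ (j + 1) = 0)
    (a b : S) : (a + 2 * b) ^ 2 ^ j = a ^ 2 ^ j := by
  have h := dvd_sub_pow_of_dvd_sub (p := 2) (a := a + 2 * b) (b := a) ⟨b, by push_cast; ring⟩ j
  rwa [Nat.cast_ofNat, h2, zero_dvd_iff, sub_eq_zero] at h

section CommRing

variable {A : Type*} [CommRing A]

lemma aeval_fibPoly_add_two (t : A) (m : ℕ) :
    aeval t (fibPoly (m + 2)) = t * aeval t (fibPoly (m + 1)) + aeval t (fibPoly m) := by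
  simp [fibPoly]

lemma periodic_aeval_fibPoly_of_periodic_derivative (x : A) {p : ℕ}
    (h : Periodic (fun m ↦ aeval x (derivative (fibPoly m))) p) :
    Periodic (fun m ↦ aeval x (fibPoly m)) p := by
  have h' (m : ℕ) : aeval x (derivative (fibPoly (m + p))) = aeval x (derivative (fibPoly m)) :=
    h m
  have hval (m : ℕ) : aeval x (fibPoly (m + 1)) = aeval x (derivative (fibPoly (m + 2))) -
      x * aeval x (derivative (fibPoly (m + 1))) - aeval x (derivative (fibPoly m)) := by
    simp [derivative_fibPoly_add_two]
    ring
  have hsucc (m : ℕ) : aeval x (fibPoly (m + 1 + p)) = aeval x (fibPoly (m + 1)) := by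
    rw [add_right_comm m 1 p, hval, hval, add_right_comm m p 2, add_right_comm m p 1, h' (m + 2),
      h' (m + 1), h' m]
  have hzero : aeval x (fibPoly p) =
      aeval x (fibPoly (1 + 1 + p)) - x * aeval x (fibPoly (0 + 1 + p)) := by
    rw [add_comm _ p, add_comm _ p, aeval_fibPoly_add_two]
    ring
  rintro (_ | m)
  · show aeval x (fibPoly (0 + p)) = aeval x (fibPoly 0)
    rw [zero_add, hzero, hsucc, hsucc]
    simp [fibPoly]
  · exact hsucc m

def fibMatrix (t : A) : Matrix (Fin 2) (Fin 2) A := !![t, 1; 1, 0]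

lemma fibMatrix_pow_succ (t : A) (m : ℕ) :
    fibMatrix t ^ (m + 1) =
      !![aeval t (fibPoly (m + 2)), aeval t (fibPoly (m + 1));
        aeval t (fibPoly (m + 1)), aeval t (fibPoly m)] := by
  induction m with
  | zero => simp [fibMatrix, fibPoly]
  | succ m ih =>
    rw [pow_succ, ih, fibMatrix, Matrix.mul_fin_two, aeval_fibPoly_add_two t (m + 1),
      aeval_fibPoly_add_two t m]
    ext i j
    fin_cases i <;> fin_cases j <;> simp <;> ring

lemma isUnit_fibMatrix (t : A) : IsUnit (fibMatrix t) := by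
  simp [Matrix.isUnit_iff_isUnit_det, fibMatrix, Matrix.det_fin_two_of]

lemma fibMatrix_pow_eq_one_iff (t : A) (p : ℕ) :
    fibMatrix t ^ p = 1 ↔ Periodic (fun m ↦ aeval t (fibPoly m)) p := by
  constructor
  · intro h m
    have hpow : fibMatrix t ^ (m + p + 1) = fibMatrix t ^ (m + 1) := by
      rw [add_right_comm, pow_add, h, mul_one]
    simpa [fibMatrix_pow_succ] using congrFun (congrFun hpow 1) 1
  · intro h
    have h' (n : ℕ) : aeval t (fibPoly (n + p)) = aeval t (fibPoly n) := h n
    have hpow : fibMatrix t ^ p * fibMatrix t = 1 * fibMatrix t := by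
      rw [← pow_succ, fibMatrix_pow_succ, add_comm p, add_comm p, h' 2, h' 1, ← zero_add p, h' 0]
      simp [fibMatrix, fibPoly]
    exact (isUnit_fibMatrix t).mul_left_inj.mp hpow

lemma fibMatrix_pow_three (t : A) : fibMatrix t ^ 3 = t • 1 + (t ^ 2 + 1) • fibMatrix t := by
  rw [fibMatrix_pow_succ]
  ext i j
  fin_cases i <;> fin_cases j <;> simp [fibMatrix, fibPoly] <;> ring

lemma fibMatrix_pow_three_mul_two_pow {t c : A} (hc : t ^ 2 + 1 = 2 * c) {j : ℕ}
    (h2 : (2 : A) ^ (j + 1) = 0) :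
    fibMatrix t ^ (3 * 2 ^ j) = algebraMap A _ (t ^ 2 ^ j) := by
  have h2X : (2 : A[X]) ^ (j + 1) = 0 := by rw [← map_ofNat C, ← map_pow, h2, map_zero]
  have hcube : fibMatrix t ^ 3 = aeval (fibMatrix t) (C t + 2 * (C c * X)) := by
    rw [fibMatrix_pow_three, hc]
    simp only [map_add, map_mul, aeval_C, aeval_X, Algebra.algebraMap_eq_smul_one,
      smul_mul_assoc, one_mul, two_mul, add_smul]
  rw [pow_mul, hcube, ← map_pow, add_two_mul_pow_two_pow h2X, ← map_pow, aeval_C]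

lemma map_fibMatrix {B : Type*} [CommRing B] (f : A →+* B) (t : A) :
    f.mapMatrix (fibMatrix t) = fibMatrix (f t) := by
  ext i j
  fin_cases i <;> fin_cases j <;> simp [fibMatrix]

lemma orderOf_fibMatrix_one_zmod_two : orderOf (fibMatrix (1 : ZMod 2)) = 3 :=
  orderOf_eq_prime (by decide) (by decide)

lemma three_dvd_of_fibMatrix_pow_eq_one {x : A} (f : A →+* ZMod 2) (hx : f x = 1) {p : ℕ}
    (hp : fibMatrix x ^ p = 1) : 3 ∣ p := by
  rw [← orderOf_fibMatrix_one_zmod_two, orderOf_dvd_iff_pow_eq_one, ← hx, ← map_fibMatrix,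
    ← map_pow, hp, map_one]

lemma aeval_inl_add_eps (x : A) (q : ℤ[X]) :
    aeval (inl x + ε : A[ε]) q = inl (aeval x q) + inr (aeval x (derivative q)) := by
  have hinl (r : ℤ[X]) : aeval (inl x : A[ε]) r = inl (aeval x r) :=
    aeval_algHom_apply (inlAlgHom ℤ A A) x r
  rw [aeval_add_of_sq_eq_zero _ _ _ eps_pow_two, hinl, hinl, inr_eq_smul_eps, inl_mul_eq_smul]

lemma periodic_aeval_inl_add_eps_iff (x : A) (p : ℕ) :
    Periodic (fun m ↦ aeval (inl x + ε : A[ε]) (fibPoly m)) p ↔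
      Periodic (fun m ↦ aeval x (derivative (fibPoly m))) p := by
  refine ⟨fun h m ↦ by simpa [aeval_inl_add_eps] using congrArg snd (h m), fun h m ↦ ?_⟩
  have hval := periodic_aeval_fibPoly_of_periodic_derivative x h
  simp only [aeval_inl_add_eps]
  exact congrArg₂ (fun a b ↦ inl a + inr b) (hval m) (h m)

lemma one_add_eps_pow (n : ℕ) : (1 + ε : A[ε]) ^ n = 1 + (n : A[ε]) * ε := by
  induction n with
  | zero => simp
  | succ n ih =>
    rw [pow_succ, ih]
    push_cast
    linear_combination (n : A[ε]) * eps_mul_eps (R := A)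

lemma dualNumber_two_pow_eq_zero {l : ℕ} (h2 : (2 : A) ^ l = 0) : (2 : A[ε]) ^ l = 0 := by
  rw [← map_ofNat (inlHom A A), ← map_pow, h2, map_zero]

lemma fibMatrix_inl_add_eps_pow_three_mul_two_pow {x : A} (hx : Odd x) {l j : ℕ}
    (h2 : (2 : A) ^ l = 0) (hj : l ≤ j + 1) :
    fibMatrix (inl x + ε : A[ε]) ^ (3 * 2 ^ j) = algebraMap A[ε] _ (1 + 2 ^ j * ε) := by
  obtain ⟨w, rfl⟩ := hx
  have h2' : (2 : A[ε]) ^ (j + 1) = 0 := pow_eq_zero_of_le hj (dualNumber_two_pow_eq_zero h2)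
  have hinl (a : A) : (inl a : A[ε]) = inlHom A A a := rfl
  have hc : (inl (2 * w + 1) + ε : A[ε]) ^ 2 + 1 =
      2 * (inl (2 * w ^ 2 + 2 * w + 1) + inl (2 * w + 1) * ε) := by
    simp only [hinl, map_add, map_mul, map_pow, map_one, map_ofNat]
    linear_combination eps_mul_eps (R := A)
  have ht : (inl (2 * w + 1) + ε : A[ε]) = 1 + ε + 2 * inl w := by
    simp only [hinl, map_add, map_mul, map_one, map_ofNat]
    ring
  rw [fibMatrix_pow_three_mul_two_pow hc h2', ht, add_two_mul_pow_two_pow h2', one_add_eps_pow,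
    Nat.cast_pow, Nat.cast_ofNat]

lemma fibMatrix_inl_add_eps_pow_three_mul_two_pow_self {x : A} (hx : Odd x) {l : ℕ}
    (h2 : (2 : A) ^ l = 0) : fibMatrix (inl x + ε : A[ε]) ^ (3 * 2 ^ l) = 1 := by
  rw [fibMatrix_inl_add_eps_pow_three_mul_two_pow hx h2 l.le_succ,
    dualNumber_two_pow_eq_zero h2, zero_mul, add_zero, map_one]

end CommRing

lemma fibMatrix_pow_eq_one_iff_modEq (s : ℤ) (n p : ℕ) :
    fibMatrix (inl (s : ZMod n) + ε : (ZMod n)[ε]) ^ p = 1 ↔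
      ∀ m : ℕ, (derivative (fibPoly (m + p))).eval s ≡
        (derivative (fibPoly m)).eval s [ZMOD n] := by
  rw [fibMatrix_pow_eq_one_iff]
  refine (periodic_aeval_inl_add_eps_iff _ p).trans (forall_congr' fun m ↦ ?_)
  simp only [aeval_intCast]
  exact ZMod.intCast_eq_intCast_iff _ _ _

lemma two_pow_self_eq_zero_zmod (l : ℕ) : (2 : ZMod (2 ^ l)) ^ l = 0 := by
  exact_mod_cast ZMod.natCast_self (2 ^ l)

lemma orderOf_fibMatrix_pow_three {s : ℤ} (hs : Odd s) {l : ℕ} (hl : 1 ≤ l) :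
    orderOf (fibMatrix (inl (s : ZMod (2 ^ l)) + ε) ^ 3) = 2 ^ l := by
  obtain ⟨k, rfl⟩ : ∃ k, l = k + 1 := ⟨l - 1, by omega⟩
  have hx : Odd (s : ZMod (2 ^ (k + 1))) := hs.map (Int.castRingHom _)
  refine orderOf_eq_prime_pow ?_ ?_
  · rw [← pow_mul,
      fibMatrix_inl_add_eps_pow_three_mul_two_pow hx (two_pow_self_eq_zero_zmod _) le_rfl]
    intro h
    have h1 : (1 + 2 ^ k * ε : (ZMod (2 ^ (k + 1)))[ε]) = 1 :=
      Matrix.scalar_inj.mp (h.trans (map_one (Matrix.scalar (Fin 2))).symm)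
    rw [← map_ofNat (inlHom _ _) 2, ← map_pow] at h1
    have h2k : ((2 ^ k : ℕ) : ZMod (2 ^ (k + 1))) = 0 := by
      simpa using congrArg snd h1
    rw [ZMod.natCast_eq_zero_iff, Nat.pow_dvd_pow_iff_le_right (by norm_num)] at h2k
    omega
  · rw [← pow_mul,
      fibMatrix_inl_add_eps_pow_three_mul_two_pow_self hx (two_pow_self_eq_zero_zmod _)]

theorem fibPoly_deriv_eval_odd_periodic (s : ℤ) (hs : Odd s) (l : ℕ) (hl : 1 ≤ l) :
    (∀ m : ℕ, (derivative (fibPoly (m + 3 * 2 ^ l))).eval s ≡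
      (derivative (fibPoly m)).eval s [ZMOD (2 : ℤ) ^ l]) ∧
    (∀ p : ℕ, 0 < p →
      (∀ m : ℕ, (derivative (fibPoly (m + p))).eval s ≡
        (derivative (fibPoly m)).eval s [ZMOD (2 : ℤ) ^ l]) →
      3 * 2 ^ l ≤ p) := by
  have hperiod (p : ℕ) := fibMatrix_pow_eq_one_iff_modEq s (2 ^ l) p
  push_cast at hperiod
  have hx : Odd (s : ZMod (2 ^ l)) := hs.map (Int.castRingHom _)
  refine ⟨(hperiod _).1 (fibMatrix_inl_add_eps_pow_three_mul_two_pow_self hx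
    (two_pow_self_eq_zero_zmod l)), fun p hp hper ↦ Nat.le_of_dvd hp ?_⟩
  have hMp := (hperiod p).2 hper
  have h3 : 3 ∣ p := three_dvd_of_fibMatrix_pow_eq_one
    ((ZMod.castHom (dvd_pow_self 2 (by omega)) (ZMod 2)).comp (fstHom ℤ _ _).toRingHom)
    (by simpa using ZMod.intCast_eq_one_iff_odd.mpr hs) hMp
  have h2 : 2 ^ l ∣ p := by
    rw [← orderOf_fibMatrix_pow_three hs hl, orderOf_dvd_iff_pow_eq_one, ← pow_mul, mul_comm,
      pow_mul, hMp, one_pow]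
  exact Nat.Coprime.mul_dvd_of_dvd_of_dvd (Nat.Coprime.pow_right _ (by norm_num)) h3 h2
end

section
/- Let m = 6 + 12q for a nonnegative integer q. Then for every integer k, F_m(1+2k) ≡ 8 (mod 16); consequently F_m maps the clopen set 1 + 2ℤ₂ into 8 + 16ℤ₂. -/
open Polynomial

/-!
For odd `x` one has `F₁₂(x) ≡ 0` and `F₁₁(x) ≡ 9 (mod 16)`, so the addition formula
`F_{n+12} = F₁₂ F_{n+1} + F₁₁ F_n` gives `F_{n+12}(x) ≡ 9 F_n(x)`. Since `F₆(x) ≡ 8` and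
`9 · 8 ≡ 8 (mod 16)`, induction on `q` finishes the proof.
-/

theorem fibPoly_add_succ (m n : ℕ) :
    fibPoly (m + n + 1) = fibPoly (m + 1) * fibPoly (n + 1) + fibPoly m * fibPoly n := by
  induction m generalizing n with
  | zero => simp [fibPoly]
  | succ m ih =>
    rw [show m + 1 + n + 1 = m + (n + 1) + 1 by omega, ih (n + 1)]
    simp only [fibPoly]
    ring

theorem fibPoly_six : fibPoly 6 = X ^ 5 + 4 * X ^ 3 + 3 * X := by
  simp only [fibPoly]
  ring

theorem fibPoly_eleven :
    fibPoly 11 = X ^ 10 + 9 * X ^ 8 + 28 * X ^ 6 + 35 * X ^ 4 + 15 * X ^ 2 + 1 := by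
  simp only [fibPoly]
  ring

theorem fibPoly_twelve :
    fibPoly 12 = X ^ 11 + 10 * X ^ 9 + 36 * X ^ 7 + 56 * X ^ 5 + 35 * X ^ 3 + 6 * X := by
  simp only [fibPoly]
  ring

theorem eval_odd_fibPoly_six_modEq (k : ℤ) : (fibPoly 6).eval (1 + 2 * k) ≡ 8 [ZMOD 16] := by
  refine (ZMod.intCast_eq_intCast_iff _ _ 16).mp ?_
  rw [fibPoly_six]
  simp only [eval_add, eval_mul, eval_pow, eval_X, eval_ofNat]
  push_cast
  generalize (k : ZMod 16) = y
  revert y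
  decide

theorem eval_odd_fibPoly_eleven_modEq (k : ℤ) : (fibPoly 11).eval (1 + 2 * k) ≡ 9 [ZMOD 16] := by
  refine (ZMod.intCast_eq_intCast_iff _ _ 16).mp ?_
  rw [fibPoly_eleven]
  simp only [eval_add, eval_mul, eval_pow, eval_X, eval_ofNat, eval_one]
  push_cast
  generalize (k : ZMod 16) = y
  revert y
  decide

theorem eval_odd_fibPoly_twelve_modEq (k : ℤ) : (fibPoly 12).eval (1 + 2 * k) ≡ 0 [ZMOD 16] := by
  refine (ZMod.intCast_eq_intCast_iff _ _ 16).mp ?_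
  rw [fibPoly_twelve]
  simp only [eval_add, eval_mul, eval_pow, eval_X, eval_ofNat]
  push_cast
  generalize (k : ZMod 16) = y
  revert y
  decide

theorem eval_odd_fibPoly_add_twelve_modEq (k : ℤ) (n : ℕ) :
    (fibPoly (n + 12)).eval (1 + 2 * k) ≡ 9 * (fibPoly n).eval (1 + 2 * k) [ZMOD 16] := by
  rw [show n + 12 = 11 + n + 1 by omega, fibPoly_add_succ, eval_add, eval_mul, eval_mul]
  calc _ ≡ 0 * (fibPoly (n + 1)).eval (1 + 2 * k) + 9 * (fibPoly n).eval (1 + 2 * k) [ZMOD 16] :=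
        ((eval_odd_fibPoly_twelve_modEq k).mul_right _).add
          ((eval_odd_fibPoly_eleven_modEq k).mul_right _)
    _ = 9 * (fibPoly n).eval (1 + 2 * k) := by ring

theorem fibPoly_m_six_mod_twelve_odd_input (q : ℕ) :
    ∀ k : ℤ, (fibPoly (6 + 12 * q)).eval (1 + 2 * k) ≡ 8 [ZMOD (16 : ℤ)] := by
  intro k
  induction q with
  | zero => exact eval_odd_fibPoly_six_modEq k
  | succ q ih =>
    rw [show 6 + 12 * (q + 1) = 6 + 12 * q + 12 by ring]
    calc _ ≡ 9 * (fibPoly (6 + 12 * q)).eval (1 + 2 * k) [ZMOD 16] :=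
          eval_odd_fibPoly_add_twelve_modEq k _
      _ ≡ 9 * 8 [ZMOD 16] := ih.mul_left 9
      _ ≡ 8 [ZMOD 16] := by decide
end
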